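/- Let (M, μ) be a measure space with 0 < μ(M) < ∞, let α < 0 be a real number, and let κ : M → ℝ be measurable with κ > 0 μ-a.e., such that κ, κ^α and κ^{α+1} are integrable. If μ(M)·∫_M κ^{α+1} dμ = (∫_M κ dμ)·(∫_M κ^α dμ), then κ is constant μ-almost everywhere. -/

import Mathlib

/-!
Let `c` be the mean of `κ`. Expanding, `∫ (κ - c) (κ ^ α - c ^ α) = ∫ κ ^ (α + 1) - c ∫ κ ^ α`,
which vanishes by the hypothesis. Since `x ↦ x ^ α` is strictly decreasing on `(0, ∞)`, the
integrand is nonpositive and vanishes only where `κ = c`, so `κ = c` almost everywhere.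
-/

open MeasureTheory

theorem StrictAntiOn.sub_mul_sub_neg {s : Set ℝ} {F : ℝ → ℝ} (hF : StrictAntiOn F s) {a b : ℝ}
    (ha : a ∈ s) (hb : b ∈ s) (hab : a ≠ b) : (a - b) * (F a - F b) < 0 := by
  rcases hab.lt_or_gt with h | h
  · exact mul_neg_of_neg_of_pos (sub_neg.2 h) (sub_pos.2 (hF ha hb h))
  · exact mul_neg_of_pos_of_neg (sub_pos.2 h) (sub_neg.2 (hF hb ha h))

theorem StrictAntiOn.sub_mul_sub_nonpos {s : Set ℝ} {F : ℝ → ℝ} (hF : StrictAntiOn F s) {a b : ℝ}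
    (ha : a ∈ s) (hb : b ∈ s) : (a - b) * (F a - F b) ≤ 0 := by
  rcases eq_or_ne a b with rfl | hab
  · simp
  · exact (hF.sub_mul_sub_neg ha hb hab).le

namespace MeasureTheory

variable {M : Type*} [MeasurableSpace M] {μ : Measure M}

theorem average_pos_of_ae_pos [IsFiniteMeasure μ] [NeZero μ] {f : M → ℝ}
    (hpos : ∀ᵐ x ∂μ, 0 < f x) (hf : Integrable f μ) : 0 < ⨍ x, f x ∂μ := by
  have hnonneg : 0 ≤ᵐ[μ] f := hpos.mono fun _ ↦ le_of_lt
  have hf_ne_zero : ¬f =ᵐ[μ] 0 := fun h ↦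
    (hpos.and h).exists.elim fun _ hx ↦ hx.1.ne' hx.2
  have hint_pos : 0 < ∫ x, f x ∂μ :=
    (integral_nonneg_of_ae hnonneg).lt_of_ne fun h ↦
      hf_ne_zero ((integral_eq_zero_iff_of_nonneg_ae hnonneg hf).1 h.symm)
  rw [average_eq, smul_eq_mul]
  exact mul_pos (inv_pos.2 measureReal_univ_pos) hint_pos

theorem Integrable.sub_const_mul_sub_const [IsFiniteMeasure μ] {f g : M → ℝ}
    (hf : Integrable f μ) (hg : Integrable g μ) (hfg : Integrable (fun x ↦ f x * g x) μ)
    (c d : ℝ) : Integrable (fun x ↦ (f x - c) * (g x - d)) μ := by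
  have h := ((hfg.sub (hg.const_mul c)).sub (hf.mul_const d)).add (integrable_const (c * d))
  refine h.congr (ae_of_all _ fun x ↦ ?_)
  simp only [Pi.add_apply, Pi.sub_apply]
  ring

theorem integral_sub_average_mul_sub_const [IsFiniteMeasure μ] {f g : M → ℝ}
    (hf : Integrable f μ) (hg : Integrable g μ) (hfg : Integrable (fun x ↦ f x * g x) μ) (d : ℝ) :
    ∫ x, (f x - ⨍ y, f y ∂μ) * (g x - d) ∂μ
      = ∫ x, f x * g x ∂μ - (⨍ y, f y ∂μ) * ∫ x, g x ∂μ := by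
  set c := ⨍ y, f y ∂μ
  have hexpand : ∀ x, (f x - c) * (g x - d) = (f x * g x - c * g x) - d * (f x - c) :=
    fun x ↦ by ring
  have hfg_sub : Integrable (fun x ↦ f x * g x - c * g x) μ := hfg.sub (hg.const_mul c)
  have hf_sub : Integrable (fun x ↦ d * (f x - c)) μ := (hf.sub (integrable_const c)).const_mul d
  simp_rw [hexpand]
  rw [integral_sub hfg_sub hf_sub, integral_sub hfg (hg.const_mul c), integral_const_mul,
    integral_const_mul, integral_sub_average, mul_zero, sub_zero]

theorem ae_eq_const_of_integral_sub_mul_sub_eq_zero {s : Set ℝ} {F : ℝ → ℝ}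
    (hF : StrictAntiOn F s) {f : M → ℝ} {c : ℝ} (hc : c ∈ s) (hfs : ∀ᵐ x ∂μ, f x ∈ s)
    (hint : Integrable (fun x ↦ (f x - c) * (F (f x) - F c)) μ)
    (hzero : ∫ x, (f x - c) * (F (f x) - F c) ∂μ = 0) :
    ∀ᵐ x ∂μ, f x = c := by
  have hneg_nonneg : 0 ≤ᵐ[μ] fun x ↦ -((f x - c) * (F (f x) - F c)) :=
    hfs.mono fun x hx ↦ neg_nonneg.2 (hF.sub_mul_sub_nonpos hx hc)
  have hneg_zero := (integral_eq_zero_iff_of_nonneg_ae hneg_nonneg hint.neg).1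
    (by rw [integral_neg, hzero, neg_zero])
  filter_upwards [hfs, hneg_zero] with x hx hx_zero
  by_contra hne
  exact (hF.sub_mul_sub_neg hx hc hne).ne (neg_eq_zero.1 hx_zero)

theorem _root_.StrictAntiOn.ae_eq_average_of_measureReal_mul_integral_eq [IsFiniteMeasure μ]
    [NeZero μ] {s : Set ℝ} {F : ℝ → ℝ} (hF : StrictAntiOn F s) {f : M → ℝ} (hfs : ∀ᵐ x ∂μ, f x ∈ s)
    (havg : ⨍ x, f x ∂μ ∈ s) (hf : Integrable f μ) (hFf : Integrable (fun x ↦ F (f x)) μ)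
    (hfFf : Integrable (fun x ↦ f x * F (f x)) μ)
    (heq : μ.real Set.univ * ∫ x, f x * F (f x) ∂μ = (∫ x, f x ∂μ) * ∫ x, F (f x) ∂μ) :
    ∀ᵐ x ∂μ, f x = ⨍ y, f y ∂μ := by
  refine ae_eq_const_of_integral_sub_mul_sub_eq_zero hF havg hfs
    (hf.sub_const_mul_sub_const hFf hfFf _ _) ?_
  rw [integral_sub_average_mul_sub_const hf hFf hfFf, average_eq, smul_eq_mul, mul_assoc, ← heq,
    inv_mul_cancel_left₀ measureReal_univ_ne_zero, sub_self]

end MeasureTheory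

theorem equality_case_implies_constant_general
    {M : Type*} [MeasurableSpace M] (μ : Measure M) [IsFiniteMeasure μ]
    (hposμ : 0 < μ Set.univ)
    (α : ℝ) (hα : α < 0) (κ : M → ℝ)
    (hpos : ∀ᵐ x ∂μ, 0 < κ x)
    (hκ : Integrable κ μ)
    (hκα : Integrable (fun x => κ x ^ α) μ)
    (hκα1 : Integrable (fun x => κ x ^ (α + 1)) μ)
    (heq : (μ Set.univ).toReal * (∫ x, κ x ^ (α + 1) ∂μ)
      = (∫ x, κ x ∂μ) * (∫ x, κ x ^ α ∂μ)) :
    ∃ c : ℝ, ∀ᵐ x ∂μ, κ x = c := by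
  have : NeZero μ := ⟨fun h ↦ by simp [h] at hposμ⟩
  have hmul : (fun x ↦ κ x ^ (α + 1)) =ᵐ[μ] fun x ↦ κ x * κ x ^ α :=
    hpos.mono fun x hx ↦ by dsimp only; rw [Real.rpow_add_one hx.ne', mul_comm]
  rw [integral_congr_ae hmul] at heq
  have hanti : StrictAntiOn (fun x : ℝ ↦ x ^ α) (Set.Ioi 0) :=
    Real.strictAntiOn_rpow_Ioi_of_exponent_neg hα
  exact ⟨_, hanti.ae_eq_average_of_measureReal_mul_integral_eq hpos
    (average_pos_of_ae_pos hpos hκ) hκ hκα (hκα1.congr hmul) heq⟩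

/-- Equality case (3.18): if μ(M) ∫ κ^{α+1} = (∫ κ)(∫ κ^α) for α < 0 and κ > 0 a.e.,
then κ is constant a.e. -/
theorem equality_case_implies_constant
    {M : Type*} [MeasurableSpace M] (μ : Measure M) [IsFiniteMeasure μ]
    (hposμ : 0 < μ Set.univ)
    (α : ℝ) (hα : α < 0) (κ : M → ℝ) (hmeas : Measurable κ)
    (hpos : ∀ᵐ x ∂μ, 0 < κ x)
    (hκ : Integrable κ μ)
    (hκα : Integrable (fun x => κ x ^ α) μ)
    (hκα1 : Integrable (fun x => κ x ^ (α + 1)) μ)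
    (heq : (μ Set.univ).toReal * (∫ x, κ x ^ (α + 1) ∂μ)
      = (∫ x, κ x ∂μ) * (∫ x, κ x ^ α ∂μ)) :
    ∃ c : ℝ, ∀ᵐ x ∂μ, κ x = c :=
  equality_case_implies_constant_general μ hposμ α hα κ hpos hκ hκα hκα1 heq
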